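/- Let X = ℕ (positive integers) with the generalized topology μ generated (via arbitrary unions) by the base β = {{1, x} : x ∈ ℕ, x ≠ 1}. Then the only μ-regular open subsets of X are ∅ and X itself; consequently, (X, μ) is nearly μ-compact but not μ-compact. -/
import Mathlib


open Set

/-- `μ` is a generalized topology on `X`: contains `∅` and closed under arbitrary unions. -/
def IsGT {X : Type} (μ : Set (Set X)) : Prop :=
  ∅ ∈ μ ∧ ∀ S ⊆ μ, ⋃₀ S ∈ μ

/-- μ-interior: union of all μ-open subsets of `A`. -/
def gInt {X : Type} (μ : Set (Set X)) (A : Set X) : Set X :=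
  ⋃₀ {V | V ∈ μ ∧ V ⊆ A}

/-- μ-closure: intersection of all μ-closed supersets of `A`. -/
def gCl {X : Type} (μ : Set (Set X)) (A : Set X) : Set X :=
  ⋂₀ {F | Fᶜ ∈ μ ∧ A ⊆ F}

/-- `A` is μ-regular open. -/
def RegOpen {X : Type} (μ : Set (Set X)) (A : Set X) : Prop :=
  A = gInt μ (gCl μ A)

/-- `A` is μ-regular closed. -/
def RegClosed {X : Type} (μ : Set (Set X)) (A : Set X) : Prop :=
  A = gCl μ (gInt μ A)

/-- Nearly μ-compact: every cover by μ-regular open sets has a finite subcover. -/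
def NearlyCompact {X : Type} (μ : Set (Set X)) : Prop :=
  ∀ C : Set (Set X), (∀ A ∈ C, RegOpen μ A) → ⋃₀ C = univ →
    ∃ t : Finset (Set X), ↑t ⊆ C ∧ ⋃₀ (t : Set (Set X)) = univ

/-- μ-compact: every μ-open cover has a finite subcover. -/
def GCompact {X : Type} (μ : Set (Set X)) : Prop :=
  ∀ C : Set (Set X), (∀ A ∈ C, A ∈ μ) → ⋃₀ C = univ →
    ∃ t : Finset (Set X), ↑t ⊆ C ∧ ⋃₀ (t : Set (Set X)) = univ

/-- The GT on the positive integers generated by the base of sets {1, x}, x ≠ 1. -/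
def muEx6 : Set (Set ℕ+) :=
  {A | ∃ S : Set (Set ℕ+), (∀ B ∈ S, ∃ x : ℕ+, x ≠ 1 ∧ B = {1, x}) ∧ A = ⋃₀ S}

lemma mem_mu_iff {A : Set ℕ+} :
    A ∈ muEx6 ↔ A = ∅ ∨ (1 ∈ A ∧ ∃ x : ℕ+, x ≠ 1 ∧ x ∈ A) := by
  constructor
  · rintro ⟨S, hS, rfl⟩
    rcases eq_or_ne (⋃₀ S) ∅ with h | h
    · exact Or.inl h
    · right
      rcases Set.nonempty_iff_ne_empty.2 h with ⟨y, B, hB, hyB⟩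
      rcases hS B hB with ⟨x, hx1, rfl⟩
      exact ⟨⟨_, hB, Or.inl rfl⟩, x, hx1, ⟨_, hB, Or.inr rfl⟩⟩
  · rintro (rfl | ⟨h1, x0, hx0, hx0A⟩)
    · exact ⟨∅, by simp, by simp⟩
    · refine ⟨{B | ∃ x : ℕ+, x ≠ 1 ∧ x ∈ A ∧ B = {1, x}}, ?_, ?_⟩
      · rintro B ⟨x, hx1, _, rfl⟩; exact ⟨x, hx1, rfl⟩
      · apply Set.Subset.antisymm
        · intro y hy
          rcases eq_or_ne y 1 with rfl | hy1
          · exact ⟨{1, x0}, ⟨x0, hx0, hx0A, rfl⟩, Or.inl rfl⟩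
          · exact ⟨{1, y}, ⟨y, hy1, hy, rfl⟩, Or.inr rfl⟩
        · rintro y ⟨B, ⟨x, hx1, hxA, rfl⟩, hyB⟩
          rcases hyB with rfl | rfl
          · exact h1
          · exact hxA

lemma univ_mem_mu : (univ : Set ℕ+) ∈ muEx6 :=
  mem_mu_iff.2 (Or.inr ⟨trivial, 2, by decide, trivial⟩)

lemma gInt_subset {X : Type} (μ : Set (Set X)) (A : Set X) : gInt μ A ⊆ A := by
  rintro y ⟨V, ⟨_, hVA⟩, hyV⟩; exact hVA hyV

lemma subset_gCl {X : Type} (μ : Set (Set X)) (A : Set X) : A ⊆ gCl μ A := by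
  intro y hy F hF; exact hF.2 hy

lemma gInt_mem (A : Set ℕ+) : gInt muEx6 A ∈ muEx6 := by
  apply mem_mu_iff.2
  rcases eq_or_ne (gInt muEx6 A) ∅ with h | h
  · exact Or.inl h
  · right
    rcases Set.nonempty_iff_ne_empty.2 h with ⟨y, V, hV, hyV⟩
    have hV' := hV
    rcases mem_mu_iff.1 hV.1 with rfl | ⟨h1, x, hx1, hxV⟩
    · exact absurd hyV (by simp)
    · exact ⟨⟨V, hV', h1⟩, x, hx1, ⟨V, hV', hxV⟩⟩

lemma gCl_eq_univ {A : Set ℕ+} (h1 : 1 ∈ A) : gCl muEx6 A = univ := by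
  apply Set.eq_univ_of_forall
  intro y F ⟨hFc, hAF⟩
  rcases mem_mu_iff.1 hFc with h | ⟨h1c, _⟩
  · have : F = univ := by
      rw [← compl_compl F, h, compl_empty]
    rw [this]; trivial
  · exact absurd (hAF h1) h1c

lemma gInt_univ : gInt muEx6 (univ : Set ℕ+) = univ := by
  apply Set.Subset.antisymm (gInt_subset _ _)
  intro y _
  exact ⟨univ, ⟨univ_mem_mu, subset_rfl⟩, trivial⟩

lemma regOpen_iff (A : Set ℕ+) : RegOpen muEx6 A ↔ A = ∅ ∨ A = univ := by
  constructor
  · intro hA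
    have hAmu : A ∈ muEx6 := hA ▸ gInt_mem _
    rcases mem_mu_iff.1 hAmu with h | ⟨h1, _⟩
    · exact Or.inl h
    · right
      rw [hA, gCl_eq_univ h1, gInt_univ]
  · rintro (rfl | rfl)
    · have hcl : gCl muEx6 (∅ : Set ℕ+) = ∅ := by
        apply Set.Subset.antisymm
        · intro y hy
          exact hy ∅ ⟨by rw [compl_empty]; exact univ_mem_mu, subset_rfl⟩
        · exact subset_gCl _ _
      unfold RegOpen
      rw [hcl]
      apply Set.Subset.antisymm
      · exact Set.empty_subset _
      · exact (gInt_subset _ _)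
    · unfold RegOpen
      have : gCl muEx6 (univ : Set ℕ+) = univ :=
        Set.eq_univ_of_univ_subset (subset_gCl _ _)
      rw [this, gInt_univ]

theorem example6 :
    (∀ A : Set ℕ+, RegOpen muEx6 A ↔ A = ∅ ∨ A = univ) ∧
    NearlyCompact muEx6 ∧ ¬ GCompact muEx6 := by
  refine ⟨regOpen_iff, ?_, ?_⟩
  · intro C hC hcov
    have : ∃ A ∈ C, (1 : ℕ+) ∈ A := by
      have : (1 : ℕ+) ∈ ⋃₀ C := hcov ▸ trivial
      rcases this with ⟨A, hA, h1⟩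
      exact ⟨A, hA, h1⟩
    rcases this with ⟨A, hAC, h1A⟩
    rcases (regOpen_iff A).1 (hC A hAC) with rfl | rfl
    · exact absurd h1A (by simp)
    · exact ⟨{univ}, by simpa using hAC, by simp⟩
  · intro hcomp
    rcases hcomp {B | ∃ x : ℕ+, x ≠ 1 ∧ B = {1, x}}
      (fun B ⟨x, hx1, hB⟩ => ⟨{B}, fun B' hB' => ⟨x, hx1, by simpa using hB' ▸ hB⟩, by simp⟩)
      (by
        apply Set.eq_univ_of_forall
        intro y
        rcases eq_or_ne y 1 with rfl | hy1
        · exact ⟨{1, 2}, ⟨2, by decide, rfl⟩, Or.inl rfl⟩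
        · exact ⟨{1, y}, ⟨y, hy1, rfl⟩, Or.inr rfl⟩) with ⟨t, htC, htcov⟩
    have hfin : (⋃₀ (t : Set (Set ℕ+))).Finite := by
      apply Set.Finite.sUnion t.finite_toSet
      intro B hB
      rcases htC hB with ⟨x, _, rfl⟩
      exact (Set.finite_singleton x).insert 1
    rw [htcov] at hfin
    exact Set.infinite_univ hfin
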